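/- Let E be a closed subset of the unit circle T. Then E is porous if and only if there exists a constant C > 0 such that for every dyadic arc J one has Σ_{I ∈ E(J)} |I| ≤ C|J|, where E(J) is the family of dyadic arcs I ⊂ J such that I ∩ E ≠ ∅. -/

import Mathlib

open Complex MeasureTheory Set Filter Topology
open scoped ENNReal NNReal Real

noncomputable section

namespace WEPPaper

/-- The open unit disc `𝔻` in `ℂ`. -/
def disc : Set ℂ := {z : ℂ | ‖z‖ < 1}

/-- The unit circle `𝕋` in `ℂ`. -/
def circleSet : Set ℂ := {z : ℂ | ‖z‖ = 1}

/-- The point of the unit circle at angle `θ`. -/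
def ePt (θ : ℝ) : ℂ := Complex.exp ((θ : ℂ) * Complex.I)

/-- Normalised arclength measure on the unit circle (total mass `1`, i.e. `|𝕋| = 1`). -/
def circleMeasure : Measure ℂ :=
  (ENNReal.ofReal (2 * Real.pi))⁻¹ •
    (volume.restrict (Set.Ico (0 : ℝ) (2 * Real.pi))).map ePt

/-- The (half-open) arc of the circle with left endpoint at angle `a` and normalised
length `t` (so angular length `2πt`). -/
def arc (a t : ℝ) : Set ℂ := ePt '' Set.Ico a (a + 2 * Real.pi * t)

/-- The corresponding open arc. -/
def arcInt (a t : ℝ) : Set ℂ := ePt '' Set.Ioo a (a + 2 * Real.pi * t)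

/-- The point `z(J) = (1 - (3/4)|J|) ξ_J` associated to the arc with left endpoint
angle `a` and normalised length `t` (its centre is at angle `a + πt`). -/
def zpt (a t : ℝ) : ℂ := ((1 : ℂ) - (3 / 4 : ℝ) * t) * ePt (a + Real.pi * t)

/-- Left endpoint angle of the dyadic arc `[2π k 2⁻ⁿ, 2π (k+1) 2⁻ⁿ)`. -/
def dyA (n k : ℕ) : ℝ := 2 * Real.pi * k * ((2 : ℝ) ^ n)⁻¹

/-- Normalised length `2⁻ⁿ` of a dyadic arc of generation `n`. -/
def dyL (n : ℕ) : ℝ := ((2 : ℝ) ^ n)⁻¹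

/-- The dyadic arc `[2π k 2⁻ⁿ, 2π (k+1) 2⁻ⁿ)` on the circle. -/
def dyadicArc (n k : ℕ) : Set ℂ := arc (dyA n k) (dyL n)

/-- The interior (relative to the circle) of the dyadic arc. -/
def dyadicArcInt (n k : ℕ) : Set ℂ := arcInt (dyA n k) (dyL n)

/-- The point `z(J)` for the dyadic arc `J` indexed by `(n, k)`. -/
def zdy (n k : ℕ) : ℂ := zpt (dyA n k) (dyL n)

/-- Normalised length of a subset of the circle. -/
def len (S : Set ℂ) : ℝ := (circleMeasure S).toReal

/-- The collection of connected components of a subset `U` of `ℂ`. -/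
def components (U : Set ℂ) : Set (Set ℂ) := {V | ∃ x ∈ U, V = connectedComponentIn U x}

/-- A closed subset `E` of the circle has finite entropy if
`Σ |J_k| log (1/|J_k|) < ∞`, the sum being over the connected components `J_k`
of `𝕋 \ E`. -/
def FiniteEntropy (E : Set ℂ) : Prop :=
  ∃ M : ℝ, ∀ F : Finset (Set ℂ), (↑F : Set (Set ℂ)) ⊆ components (circleSet \ E) →
    ∑ V ∈ F, len V * Real.log (1 / len V) ≤ M

/-- The pseudohyperbolic distance `ρ(z,w) = |(z-w)/(1-conj w · z)|`. -/
def pdist (z w : ℂ) : ℝ := ‖(z - w) / (1 - (starRingEnd ℂ) w * z)‖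

/-- The pseudohyperbolic distance from a point to a set (`⊤` for the empty set). -/
def pdistSet (z : ℂ) (S : Set ℂ) : ℝ≥0∞ := ⨅ w ∈ S, ENNReal.ofReal (pdist z w)

/-- The zero set of `f` in the unit disc. -/
def zeroSet (f : ℂ → ℂ) : Set ℂ := {z ∈ disc | f z = 0}

/-- `f ∈ H^∞`: `f` is bounded and analytic on the unit disc. -/
def BddAnalytic (f : ℂ → ℂ) : Prop :=
  DifferentiableOn ℂ f disc ∧ ∃ M : ℝ, ∀ z ∈ disc, ‖f z‖ ≤ M

/-- `f` is an inner function: `f ∈ H^∞` and the radial limits of `|f|` equal `1`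
at almost every point of the circle. -/
def IsInner (f : ℂ → ℂ) : Prop :=
  BddAnalytic f ∧
    ∀ᵐ θ ∂(volume.restrict (Set.Ico (0 : ℝ) (2 * Real.pi))),
      Tendsto (fun r : ℝ => ‖f ((r : ℂ) * ePt θ)‖)
        (𝓝[<] (1 : ℝ)) (𝓝 (1 : ℝ))

/-- `η_f(ε) = inf {|f(z)| : ρ(z, Z(f)) > ε} > 0`. -/
def WEPAt (f : ℂ → ℂ) (ε : ℝ) : Prop :=
  ∃ η : ℝ, 0 < η ∧ ∀ z ∈ disc,
    ENNReal.ofReal ε < pdistSet z (zeroSet f) → η ≤ ‖f z‖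

/-- The Weak Embedding Property. -/
def HasWEP (f : ℂ → ℂ) : Prop := ∀ ε : ℝ, 0 < ε → WEPAt f ε

/-- `f` is wepable: some multiple `f·J` of `f` by an inner function `J` has the WEP. -/
def Wepable (f : ℂ → ℂ) : Prop :=
  ∃ J : ℂ → ℂ, IsInner J ∧ HasWEP (fun z => f z * J z)

/-- The singular inner function associated to a (positive singular) measure `μ`
on the unit circle: `S_μ(z) = exp (-∫ (w+z)/(w-z) dμ(w))`. -/
def singInner (μ : Measure ℂ) (z : ℂ) : ℂ :=
  Complex.exp (-∫ w, (w + z) / (w - z) ∂μ)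

/-- The (closed) support of a measure on `ℂ`. -/
def measSupport (μ : Measure ℂ) : Set ℂ :=
  {x : ℂ | ∀ U : Set ℂ, IsOpen U → x ∈ U → μ U ≠ 0}

/-- An individual Blaschke factor with zero at `a ∈ 𝔻`. -/
def blaschkeFactor (a z : ℂ) : ℂ :=
  if a = 0 then z
  else ((‖a‖ : ℂ) / a) * ((a - z) / (1 - (starRingEnd ℂ) a * z))

/-- A Blaschke factor, where points on the unit circle are allowed as padding and
give the constant factor `1` (this allows finite Blaschke products). -/
def bFactor (a z : ℂ) : ℂ := if ‖a‖ < 1 then blaschkeFactor a z else 1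

/-- A Blaschke sequence: points of the closed disc satisfying the Blaschke condition
`Σ (1 - |a_n|) < ∞`. -/
def IsBlaschkeSeq (a : ℕ → ℂ) : Prop :=
  (∀ n, ‖a n‖ ≤ 1) ∧ Summable (fun n => 1 - ‖a n‖)

/-- `B` is the Blaschke product with zero sequence `a`. -/
def IsBlaschkeProductWith (a : ℕ → ℂ) (B : ℂ → ℂ) : Prop :=
  IsBlaschkeSeq a ∧ ∀ z ∈ disc,
    Tendsto (fun N => ∏ n ∈ Finset.range N, bFactor (a n) z) atTop (𝓝 (B z))

/-- `B` is a Blaschke product. -/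
def IsBlaschkeProduct (B : ℂ → ℂ) : Prop := ∃ a : ℕ → ℂ, IsBlaschkeProductWith a B

/-- `B` is a Blaschke product whose zero set is exactly `Λ ⊆ 𝔻`. -/
def IsBlaschkeWithZeroSet (Λ : Set ℂ) (B : ℂ → ℂ) : Prop :=
  ∃ a : ℕ → ℂ, IsBlaschkeProductWith a B ∧ Set.range a ∩ disc = Λ

/-- `S` is easily wepable: there are `m < 1` and a Blaschke product `B` with
`Z(B) ⊆ {|S| < m}` such that `SB` has the WEP. -/
def EasilyWepable (S : ℂ → ℂ) : Prop :=
  ∃ m : ℝ, m < 1 ∧ ∃ B : ℂ → ℂ, IsBlaschkeProduct B ∧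
    HasWEP (fun z => S z * B z) ∧
    zeroSet B ⊆ {z ∈ disc | ‖S z‖ < m}

/-- The Poisson integral of a finite measure `μ` on the unit circle. -/
def poisson (μ : Measure ℂ) (z : ℂ) : ℝ :=
  ∫ w, (1 - ‖z‖ ^ 2) / ‖w - z‖ ^ 2 ∂μ

/-- `E ⊆ 𝕋` is porous with constant `C`: every arc `J` contains a subarc
`J' ⊆ J \ E` with `|J'| > C|J|`. -/
def PorousWith (C : ℝ) (E : Set ℂ) : Prop :=
  ∀ a t : ℝ, 0 < t → t ≤ 1 →
    ∃ a' t' : ℝ, 0 < t' ∧ arc a' t' ⊆ arc a t \ E ∧ C * t < t'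

/-- `E ⊆ 𝕋` is porous. -/
def Porous (E : Set ℂ) : Prop := ∃ C : ℝ, 0 < C ∧ PorousWith C E

/-- `w(t) = sup { μ(J) : J ⊆ 𝕋 an arc with |J| = t }`. -/
def wSup (μ : Measure ℂ) (t : ℝ) : ℝ :=
  sSup {x : ℝ | ∃ a : ℝ, x = (μ (arc a t)).toReal}

/-- The top half `T(J)` of the Carleson box of the dyadic arc `J` indexed by `(n,k)`. -/
def topBox (n k : ℕ) : Set ℂ :=
  {z : ℂ | ∃ r θ : ℝ, z = (r : ℂ) * ePt θ ∧ dyA n k ≤ θ ∧ θ ≤ dyA n (k + 1) ∧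
    1 - dyL n ≤ r ∧ r ≤ 1 - dyL n / 2}

/-- The boundary `∂T(J)` of the top half of the Carleson box (its four sides). -/
def topBoxBoundary (n k : ℕ) : Set ℂ :=
  ((fun θ : ℝ => ((1 - dyL n : ℝ) : ℂ) * ePt θ) '' Set.Icc (dyA n k) (dyA n (k + 1))) ∪
  ((fun θ : ℝ => ((1 - dyL n / 2 : ℝ) : ℂ) * ePt θ) '' Set.Icc (dyA n k) (dyA n (k + 1))) ∪
  ((fun r : ℝ => (r : ℂ) * ePt (dyA n k)) '' Set.Icc (1 - dyL n) (1 - dyL n / 2)) ∪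
  ((fun r : ℝ => (r : ℂ) * ePt (dyA n (k + 1))) '' Set.Icc (1 - dyL n) (1 - dyL n / 2))

/-- The arclength measure `ds` on `∂T(J)`. -/
def topBoxBoundaryMeasure (n k : ℕ) : Measure ℂ :=
  ENNReal.ofReal (1 - dyL n) •
    ((volume.restrict (Set.Icc (dyA n k) (dyA n (k + 1)))).map
      (fun θ : ℝ => ((1 - dyL n : ℝ) : ℂ) * ePt θ)) +
  ENNReal.ofReal (1 - dyL n / 2) •
    ((volume.restrict (Set.Icc (dyA n k) (dyA n (k + 1)))).map
      (fun θ : ℝ => ((1 - dyL n / 2 : ℝ) : ℂ) * ePt θ)) +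
  (volume.restrict (Set.Icc (1 - dyL n) (1 - dyL n / 2))).map
    (fun r : ℝ => (r : ℂ) * ePt (dyA n k)) +
  (volume.restrict (Set.Icc (1 - dyL n) (1 - dyL n / 2))).map
    (fun r : ℝ => (r : ℂ) * ePt (dyA n (k + 1)))

/-- `u` is harmonic on the unit disc. -/
def HarmonicOnDisc (u : ℂ → ℝ) : Prop :=
  ContDiffOn ℝ 2 u disc ∧
    ∀ z ∈ disc,
      iteratedFDeriv ℝ 2 u z ![1, 1] + iteratedFDeriv ℝ 2 u z ![Complex.I, Complex.I] = 0

/-- The arc `2J`, with the same centre as the dyadic arc `J` indexed by `(n,k)`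
and twice its length. -/
def doubleArc (n k : ℕ) : Set ℂ :=
  arc (2 * Real.pi * ((k : ℝ) - 1 / 2) * ((2 : ℝ) ^ n)⁻¹) (2 * dyL n)

/-- The dyadic arcs `J` with `2J ⊆ 𝕋 \ E`. -/
def goodDy (E : Set ℂ) : Set (ℕ × ℕ) :=
  {p : ℕ × ℕ | p.2 < 2 ^ p.1 ∧ doubleArc p.1 p.2 ⊆ circleSet \ E}

/-- The maximal dyadic arcs `J` with `2J ⊆ 𝕋 \ E`. -/
def maxGoodDy (E : Set ℂ) : Set (ℕ × ℕ) :=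
  {p ∈ goodDy E | ∀ q ∈ goodDy E,
    dyadicArc p.1 p.2 ⊆ dyadicArc q.1 q.2 → dyadicArc p.1 p.2 = dyadicArc q.1 q.2}

/-- `‖f‖_{∞,n} = sup_{z ∈ 𝔻} (Σ_j |f_j(z)|²)^{1/2}` for an `n`-tuple of functions. -/
def hinfNorm (n : ℕ) (f : Fin n → ℂ → ℂ) : ℝ≥0∞ :=
  ⨆ z ∈ disc, ENNReal.ofReal (Real.sqrt (∑ j, ‖f j z‖ ^ 2))

/-- `χ_I(f) = inf {‖g‖_{∞,n} : ∃ h ∈ H^∞, Σ g_j f_j + h I ≡ 1}`. -/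
def chiC (n : ℕ) (I : ℂ → ℂ) (f : Fin n → ℂ → ℂ) : ℝ≥0∞ :=
  ⨅ g ∈ {g : Fin n → ℂ → ℂ |
      (∀ j, DifferentiableOn ℂ (g j) disc) ∧
      ∃ h : ℂ → ℂ, BddAnalytic h ∧ ∀ z ∈ disc, (∑ j, g j z * f j z) + h z * I z = 1},
    hinfNorm n g

/-- `c_n(δ, I) = sup {χ_I(f) : δ² ≤ inf_{λ ∈ Z(I)} Σ |f_j(λ)|², ‖f‖_{∞,n} ≤ 1}`. -/
def cConst (n : ℕ) (I : ℂ → ℂ) (δ : ℝ) : ℝ≥0∞ :=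
  ⨆ f ∈ {f : Fin n → ℂ → ℂ |
      (∀ j, DifferentiableOn ℂ (f j) disc) ∧ hinfNorm n f ≤ 1 ∧
      ∀ lam ∈ zeroSet I, δ ^ 2 ≤ ∑ j, ‖f j lam‖ ^ 2},
    chiC n I f

/-- `δ_n(I) = inf {δ : c_n(δ, I) < ∞}`. -/
def deltaN (n : ℕ) (I : ℂ → ℂ) : ℝ :=
  sInf {δ : ℝ | δ ∈ Set.Ioo (0 : ℝ) 1 ∧ cConst n I δ < ⊤}

/-- `δ̃(I) = inf {ε : η_I(ε) > 0}`. -/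
def tildeDelta (I : ℂ → ℂ) : ℝ :=
  sInf {ε : ℝ | 0 < ε ∧ WEPAt I ε}

/-- The atomic measure `μ = Σ_s b_s δ_{x_s}`. -/
def atomicMeasure (b : ℕ → ℝ) (x : ℕ → ℂ) : Measure ℂ :=
  Measure.sum (fun s => ENNReal.ofReal (b s) • Measure.dirac (x s))
/-!
Porosity with constant `C` and `2 ⋅ 2⁻ᵈ ≤ C` gives every dyadic arc a descendant `d`
generations down that misses `E`. So if `Nᵢ` counts the generation-`i` descendants of `J`
meeting `E`, the densities `Nᵢ 2⁻ⁱ` are at most `1` and shrink by the factor `1 - 2⁻ᵈ` every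
`d` generations, whence `Σ_{I ∈ E(J)} |I| = |J| Σᵢ Nᵢ 2⁻ⁱ ≤ d 2ᵈ |J|`. Conversely, a generation
in which every descendant meets `E` contributes `|J|` to the sum, so if the sum is at most
`C|J|`, one of the first `⌈C⌉ + 1` generations below `J` has a descendant missing `E`. Since
every arc contains a dyadic arc of at least a quarter of its length, `E` is porous.
-/

theorem _root_.ENNReal.tsum_le_of_le_one_of_decay {a : ℕ → ℝ≥0∞} {ρ : ℝ≥0∞} {d : ℕ}
    (hd : d ≠ 0) (h₁ : ∀ i, a i ≤ 1) (hdecay : ∀ i, a (i + d) ≤ ρ * a i) :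
    ∑' i, a i ≤ d * (1 - ρ)⁻¹ := by
  have : NeZero d := ⟨hd⟩
  have hgeom (q r : ℕ) : a (q * d + r) ≤ ρ ^ q := by
    induction q with
    | zero => simpa using h₁ r
    | succ q ih =>
      calc a ((q + 1) * d + r) = a (q * d + r + d) := by ring_nf
        _ ≤ ρ * a (q * d + r) := hdecay _
        _ ≤ ρ * ρ ^ q := by gcongr
        _ = ρ ^ (q + 1) := (pow_succ' ρ q).symm
  calc ∑' i, a i = ∑' p : ℕ × Fin d, a (p.1 * d + p.2) :=
        ((Nat.divModEquiv d).symm.tsum_eq _).symm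
    _ = ∑' q, ∑' r : Fin d, a (q * d + r) :=
        ENNReal.tsum_prod (f := fun (q : ℕ) (r : Fin d) => a (q * d + r))
    _ ≤ ∑' q, ∑' _ : Fin d, ρ ^ q :=
        ENNReal.tsum_le_tsum fun q => ENNReal.tsum_le_tsum fun r => hgeom q r
    _ = d * (1 - ρ)⁻¹ := by simp [ENNReal.tsum_mul_left, ENNReal.tsum_geometric]

lemma two_pow_mul_inv_two_pow (i : ℕ) : (2 : ℝ≥0∞) ^ i * 2⁻¹ ^ i = 1 := by
  rw [← mul_pow, ENNReal.mul_inv_cancel two_ne_zero ENNReal.ofNat_ne_top, one_pow]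

lemma two_pow_sub_one_mul_inv_two_pow (d : ℕ) :
    ((2 ^ d - 1 : ℕ) : ℝ≥0∞) * 2⁻¹ ^ d = 1 - 2⁻¹ ^ d := by
  rw [ENNReal.natCast_sub, ENNReal.sub_mul fun _ _ => by simp, Nat.cast_pow, Nat.cast_ofNat,
    two_pow_mul_inv_two_pow, Nat.cast_one, one_mul]

lemma ePt_periodic : Function.Periodic ePt (2 * π) := fun θ => by
  simpa [ePt] using Complex.exp_mul_I_periodic (θ : ℂ)

lemma ePt_injOn : InjOn ePt (Ico 0 (2 * π)) := fun _ hx _ hy h =>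
  Circle.exp_injOn_Ico (by simp) hx hy (Subtype.ext (by simpa [Circle.coe_exp, ePt] using h))

lemma arc_add_nat_mul (a t : ℝ) (N : ℕ) : arc (a + N * (2 * π)) t = arc a t := by
  rw [arc, add_right_comm, ← image_add_const_Ico, image_image]
  exact image_congr fun x _ => ePt_periodic.nat_mul N x

lemma dyL_pos (m : ℕ) : 0 < dyL m := by
  unfold dyL; positivity

lemma dyL_le_one (m : ℕ) : dyL m ≤ 1 :=
  inv_le_one_of_one_le₀ (one_le_pow₀ one_le_two)

lemma dyL_add (m i : ℕ) : dyL (m + i) = dyL m * dyL i := by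
  simp only [dyL, pow_add, mul_inv]

lemma ofReal_dyL (m : ℕ) : ENNReal.ofReal (dyL m) = 2⁻¹ ^ m := by
  rw [dyL, ← inv_pow, ENNReal.ofReal_pow (by norm_num), ENNReal.ofReal_inv_of_pos two_pos,
    ENNReal.ofReal_ofNat]

lemma exists_two_mul_dyL_le {C : ℝ} (hC : 0 < C) : ∃ d, d ≠ 0 ∧ 2 * dyL d ≤ C := by
  obtain ⟨d, hd⟩ := exists_nat_gt (2 / C)
  have hd₀ : (0 : ℝ) < d := (div_pos two_pos hC).trans hd
  refine ⟨d, by exact_mod_cast hd₀.ne', ?_⟩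
  have h2d : (d : ℝ) ≤ 2 ^ d := by exact_mod_cast Nat.lt_two_pow_self.le
  rw [div_lt_iff₀ hC] at hd
  rw [dyL, ← div_eq_mul_inv, div_le_iff₀ (by positivity)]
  nlinarith

lemma exists_dyL_le_le {t : ℝ} (ht₀ : 0 < t) (ht₂ : t ≤ 2) :
    ∃ n, 2 * dyL n ≤ t ∧ t ≤ 4 * dyL n := by
  obtain ⟨N, hN, hN'⟩ :=
    exists_nat_pow_near (x := 2 / t) (by rw [le_div_iff₀ ht₀]; linarith) one_lt_two
  refine ⟨N + 1, ?_, ?_⟩ <;> rw [dyL, pow_succ] <;> field_simp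
  · rw [div_lt_iff₀ ht₀, pow_succ] at hN'; linarith
  · rw [le_div_iff₀ ht₀] at hN; linarith

lemma dyA_eq (m j : ℕ) : dyA m j = j * (2 * π * dyL m) := by
  unfold dyA dyL; ring

lemma dyA_le_dyA_iff {m₁ j₁ m₂ j₂ : ℕ} :
    dyA m₁ j₁ ≤ dyA m₂ j₂ ↔ j₁ * 2 ^ m₂ ≤ j₂ * 2 ^ m₁ := by
  have h (m j : ℕ) : dyA m j = 2 * π * ((j : ℝ) / 2 ^ m) := by unfold dyA; ring
  rw [h, h, mul_le_mul_iff_right₀ (by positivity),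
    div_le_div_iff₀ (by positivity) (by positivity)]
  exact_mod_cast Iff.rfl

lemma dyA_lt_dyA_succ (m j : ℕ) : dyA m j < dyA m (j + 1) := by
  rw [dyA_eq, dyA_eq]; push_cast
  nlinarith [dyL_pos m, Real.pi_pos]

lemma dyadicArc_eq_image (m j : ℕ) :
    dyadicArc m j = ePt '' Ico (dyA m j) (dyA m (j + 1)) := by
  rw [dyadicArc, arc, dyA_eq, dyA_eq]; push_cast; ring_nf

lemma Ico_dyA_subset (m : ℕ) {j : ℕ} (hj : j < 2 ^ m) :
    Ico (dyA m j) (dyA m (j + 1)) ⊆ Ico 0 (2 * π) := by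
  refine Ico_subset_Ico (by unfold dyA; positivity) ?_
  have h : dyA m (j + 1) ≤ dyA 0 1 :=
    dyA_le_dyA_iff.2 (by rw [pow_zero, mul_one, one_mul]; exact hj)
  simpa [dyA] using h

lemma dyadicArc_mod (m j : ℕ) : dyadicArc m (j % 2 ^ m) = dyadicArc m j := by
  have h : dyA m j = dyA m (j % 2 ^ m) + (j / 2 ^ m : ℕ) * (2 * π) := by
    unfold dyA
    conv_lhs => rw [← Nat.mod_add_div j (2 ^ m)]
    push_cast; field_simp
  rw [dyadicArc, dyadicArc, h, arc_add_nat_mul]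

lemma exists_dyadicArc_subset_arc (a t : ℝ) {m : ℕ} (h : 2 * dyL m ≤ t) :
    ∃ k < 2 ^ m, dyadicArc m k ⊆ arc a t := by
  have hδ : 0 < 2 * π * dyL m := by have := dyL_pos m; positivity
  obtain ⟨N, hN⟩ := exists_nat_ge (-a / (2 * π))
  have hb : 0 ≤ a + N * (2 * π) := by
    rw [div_le_iff₀ (by positivity)] at hN; linarith
  set j := ⌈(a + N * (2 * π)) / (2 * π * dyL m)⌉₊
  have hj₁ : a + N * (2 * π) ≤ j * (2 * π * dyL m) := (div_le_iff₀ hδ).1 (Nat.le_ceil _)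
  have hj₂ : j * (2 * π * dyL m) < a + N * (2 * π) + 2 * π * dyL m := by
    have := Nat.ceil_lt_add_one (div_nonneg hb hδ.le)
    rwa [← lt_div_iff₀ hδ, add_div, div_self hδ.ne']
  refine ⟨j % 2 ^ m, Nat.mod_lt _ (by positivity), ?_⟩
  rw [dyadicArc_mod, dyadicArc_eq_image, ← arc_add_nat_mul a t N, arc, dyA_eq, dyA_eq]
  refine image_mono (Ico_subset_Ico hj₁ ?_)
  push_cast
  nlinarith [Real.pi_pos]

def dyadicDescendants (k i : ℕ) : Finset ℕ := Finset.Ico (k * 2 ^ i) ((k + 1) * 2 ^ i)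

lemma card_dyadicDescendants (k i : ℕ) : (dyadicDescendants k i).card = 2 ^ i := by
  rw [dyadicDescendants, Nat.card_Ico, add_mul, one_mul, Nat.add_sub_cancel_left]

lemma mem_dyadicDescendants_add {k i d j : ℕ} :
    j ∈ dyadicDescendants k (i + d) ↔ j / 2 ^ d ∈ dyadicDescendants k i := by
  have h2d : 0 < 2 ^ d := by positivity
  simp only [dyadicDescendants, Finset.mem_Ico, Nat.le_div_iff_mul_le h2d,
    Nat.div_lt_iff_lt_mul h2d, mul_assoc, ← pow_add]

lemma mem_dyadicDescendants_div (j d : ℕ) : j ∈ dyadicDescendants (j / 2 ^ d) d := by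
  simpa using (mem_dyadicDescendants_add (i := 0)).2 (by simp [dyadicDescendants])

lemma lt_two_pow_of_mem_dyadicDescendants {n k i j : ℕ} (hk : k < 2 ^ n)
    (hj : j ∈ dyadicDescendants k i) : j < 2 ^ (n + i) := by
  rw [dyadicDescendants, Finset.mem_Ico] at hj
  calc j < (k + 1) * 2 ^ i := hj.2
    _ ≤ 2 ^ n * 2 ^ i := Nat.mul_le_mul_right _ hk
    _ = 2 ^ (n + i) := (pow_add 2 n i).symm

lemma dyadicArc_subset_dyadicArc {m k i j : ℕ} (hj : j ∈ dyadicDescendants k i) :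
    dyadicArc (m + i) j ⊆ dyadicArc m k := by
  rw [dyadicDescendants, Finset.mem_Ico] at hj
  rw [dyadicArc_eq_image, dyadicArc_eq_image]
  refine image_mono (Ico_subset_Ico ?_ ?_) <;> rw [dyA_le_dyA_iff, pow_add]
  · calc k * (2 ^ m * 2 ^ i) = k * 2 ^ i * 2 ^ m := by ring
      _ ≤ j * 2 ^ m := Nat.mul_le_mul_right _ hj.1
  · calc (j + 1) * 2 ^ m ≤ (k + 1) * 2 ^ i * 2 ^ m := Nat.mul_le_mul_right _ hj.2
      _ = (k + 1) * (2 ^ m * 2 ^ i) := by ring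

lemma mem_dyadicDescendants_of_dyadicArc_subset {n k m j : ℕ} (hk : k < 2 ^ n)
    (hj : j < 2 ^ m) (h : dyadicArc m j ⊆ dyadicArc n k) :
    n ≤ m ∧ j ∈ dyadicDescendants k (m - n) := by
  rw [dyadicArc_eq_image, dyadicArc_eq_image,
    ePt_injOn.image_subset_image_iff (Ico_dyA_subset m hj) (Ico_dyA_subset n hk),
    Ico_subset_Ico_iff (dyA_lt_dyA_succ m j), dyA_le_dyA_iff, dyA_le_dyA_iff] at h
  obtain ⟨hleft, hright⟩ := h
  have hnm : n ≤ m := (Nat.pow_le_pow_iff_right one_lt_two).1 (by nlinarith)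
  obtain ⟨e, rfl⟩ := Nat.exists_eq_add_of_le hnm
  have h2n : 0 < 2 ^ n := by positivity
  refine ⟨hnm, ?_⟩
  rw [Nat.add_sub_cancel_left, dyadicDescendants, Finset.mem_Ico, pow_add] at *
  constructor
  · exact Nat.le_of_mul_le_mul_right (by linarith) h2n
  · exact Nat.lt_of_succ_le (Nat.le_of_mul_le_mul_right (by linarith) h2n)

lemma exists_disjoint_descendant_of_porousWith {E : Set ℂ} {C : ℝ} (hpor : PorousWith C E)
    {d : ℕ} (hd : 2 * dyL d ≤ C) {m j : ℕ} (hj : j < 2 ^ m) :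
    ∃ j' ∈ dyadicDescendants j d, Disjoint (dyadicArc (m + d) j') E := by
  obtain ⟨a, t, -, hsub, hlt⟩ := hpor (dyA m j) (dyL m) (dyL_pos m) (dyL_le_one m)
  have ht : 2 * dyL (m + d) ≤ t := by
    rw [dyL_add]; nlinarith [dyL_pos m]
  obtain ⟨j', hj', hJ⟩ := exists_dyadicArc_subset_arc a t ht
  obtain ⟨hsubJ, hdisj⟩ := subset_sdiff.1 (hJ.trans hsub)
  obtain ⟨-, hmem⟩ := mem_dyadicDescendants_of_dyadicArc_subset hj hj' hsubJ
  exact ⟨j', by rwa [Nat.add_sub_cancel_left] at hmem, hdisj⟩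

open Classical in
def meetingDescendants (E : Set ℂ) (n k i : ℕ) : Finset ℕ :=
  (dyadicDescendants k i).filter fun j => (dyadicArc (n + i) j ∩ E).Nonempty

lemma mem_meetingDescendants {E : Set ℂ} {n k i j : ℕ} :
    j ∈ meetingDescendants E n k i ↔
      j ∈ dyadicDescendants k i ∧ (dyadicArc (n + i) j ∩ E).Nonempty := by
  classical exact Finset.mem_filter

lemma card_meetingDescendants_le (E : Set ℂ) (n k i : ℕ) :
    (meetingDescendants E n k i).card ≤ 2 ^ i := by
  classical exact (Finset.card_filter_le _ _).trans (card_dyadicDescendants k i).le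

lemma card_meetingDescendants_lt_iff {E : Set ℂ} {n k i : ℕ} :
    (meetingDescendants E n k i).card < 2 ^ i ↔
      ∃ j ∈ dyadicDescendants k i, Disjoint (dyadicArc (n + i) j) E := by
  classical
  rw [← card_dyadicDescendants k i, meetingDescendants,
    (Finset.card_filter_le _ _).lt_iff_ne, Ne, Finset.card_filter_eq_iff]
  simp [not_nonempty_iff_eq_empty, disjoint_iff_inter_eq_empty]

lemma meetingDescendants_add_subset (E : Set ℂ) (n k i d : ℕ) :
    meetingDescendants E n k (i + d) ⊆
      (meetingDescendants E n k i).biUnion fun j => meetingDescendants E (n + i) j d := by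
  intro j hj
  simp only [mem_meetingDescendants, Finset.mem_biUnion, ← add_assoc] at hj ⊢
  obtain ⟨hjk, hmeet⟩ := hj
  have hparent := dyadicArc_subset_dyadicArc (m := n + i) (mem_dyadicDescendants_div j d)
  exact ⟨j / 2 ^ d,
    ⟨mem_dyadicDescendants_add.1 hjk, hmeet.mono (inter_subset_inter_left E hparent)⟩,
    mem_dyadicDescendants_div j d, hmeet⟩

lemma card_meetingDescendants_add_le {E : Set ℂ} {n k i d : ℕ}
    (hfree : ∀ j ∈ meetingDescendants E n k i,
      (meetingDescendants E (n + i) j d).card < 2 ^ d) :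
    (meetingDescendants E n k (i + d)).card ≤
      (2 ^ d - 1) * (meetingDescendants E n k i).card := by
  calc (meetingDescendants E n k (i + d)).card
      ≤ ∑ j ∈ meetingDescendants E n k i, (meetingDescendants E (n + i) j d).card :=
        (Finset.card_le_card (meetingDescendants_add_subset E n k i d)).trans
          Finset.card_biUnion_le
    _ ≤ (meetingDescendants E n k i).card * (2 ^ d - 1) :=
        Finset.sum_le_card_nsmul _ _ _ fun j hj => Nat.le_sub_one_of_lt (hfree j hj)
    _ = (2 ^ d - 1) * (meetingDescendants E n k i).card := mul_comm _ _

/-- The family `E(J)` of the paper, for `J = dyadicArc n k`. -/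
abbrev MeetingSubarcs (E : Set ℂ) (n k : ℕ) : Type :=
  {p : ℕ × ℕ // p.2 < 2 ^ p.1 ∧ dyadicArc p.1 p.2 ⊆ dyadicArc n k ∧
    (dyadicArc p.1 p.2 ∩ E).Nonempty}

def meetingSubarcsEquiv (E : Set ℂ) {n k : ℕ} (hk : k < 2 ^ n) :
    MeetingSubarcs E n k ≃ Σ i, meetingDescendants E n k i where
  toFun I :=
    have h := mem_dyadicDescendants_of_dyadicArc_subset hk I.2.1 I.2.2.1
    ⟨I.1.1 - n, I.1.2,
      mem_meetingDescendants.2 ⟨h.2, by rw [Nat.add_sub_cancel' h.1]; exact I.2.2.2⟩⟩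
  invFun J :=
    have h := mem_meetingDescendants.1 J.2.2
    ⟨(n + J.1, J.2), lt_two_pow_of_mem_dyadicDescendants hk h.1,
      dyadicArc_subset_dyadicArc h.1, h.2⟩
  left_inv I := Subtype.ext <| Prod.ext
    (Nat.add_sub_cancel' (mem_dyadicDescendants_of_dyadicArc_subset hk I.2.1 I.2.2.1).1) rfl
  right_inv J := Sigma.subtype_ext (Nat.add_sub_cancel_left ..) rfl

lemma tsum_meetingSubarcs_eq (E : Set ℂ) {n k : ℕ} (hk : k < 2 ^ n) :
    ∑' I : MeetingSubarcs E n k, ENNReal.ofReal (dyL I.1.1) =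
      2⁻¹ ^ n * ∑' i, ((meetingDescendants E n k i).card : ℝ≥0∞) * 2⁻¹ ^ i := by
  rw [← (meetingSubarcsEquiv E hk).symm.tsum_eq, ENNReal.tsum_sigma', ← ENNReal.tsum_mul_left]
  refine tsum_congr fun i => ?_
  simp only [meetingSubarcsEquiv, Equiv.coe_fn_symm_mk, ofReal_dyL, pow_add]
  rw [Finset.tsum_subtype (meetingDescendants E n k i) fun _ => 2⁻¹ ^ n * 2⁻¹ ^ i,
    Finset.sum_const, nsmul_eq_mul]
  ring

lemma tsum_meetingSubarcs_le_of_porousWith {E : Set ℂ} {C : ℝ} (hpor : PorousWith C E)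
    {d : ℕ} (hd : d ≠ 0) (hdC : 2 * dyL d ≤ C) {n k : ℕ} (hk : k < 2 ^ n) :
    ∑' I : MeetingSubarcs E n k, ENNReal.ofReal (dyL I.1.1) ≤
      ENNReal.ofReal (d * 2 ^ d * dyL n) := by
  have hfree (i j) (hj : j ∈ meetingDescendants E n k i) :
      (meetingDescendants E (n + i) j d).card < 2 ^ d :=
    card_meetingDescendants_lt_iff.2 <| exists_disjoint_descendant_of_porousWith hpor hdC <|
      lt_two_pow_of_mem_dyadicDescendants hk (mem_meetingDescendants.1 hj).1
  have hle_one (i : ℕ) : ((meetingDescendants E n k i).card : ℝ≥0∞) * 2⁻¹ ^ i ≤ 1 :=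
    calc _ ≤ (2 : ℝ≥0∞) ^ i * 2⁻¹ ^ i := by
          gcongr; exact_mod_cast card_meetingDescendants_le E n k i
      _ = 1 := two_pow_mul_inv_two_pow i
  have hdecay (i : ℕ) :
      ((meetingDescendants E n k (i + d)).card : ℝ≥0∞) * 2⁻¹ ^ (i + d) ≤
        (1 - 2⁻¹ ^ d) * ((meetingDescendants E n k i).card * 2⁻¹ ^ i) :=
    calc _ ≤ (((2 ^ d - 1) * (meetingDescendants E n k i).card : ℕ) : ℝ≥0∞) * 2⁻¹ ^ (i + d) := by
          gcongr; exact card_meetingDescendants_add_le (hfree i)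
      _ = _ := by rw [← two_pow_sub_one_mul_inv_two_pow]; push_cast; ring
  have hsum := ENNReal.tsum_le_of_le_one_of_decay hd hle_one hdecay
  rw [ENNReal.sub_sub_cancel ENNReal.one_ne_top
    (pow_le_one₀ (by positivity) (ENNReal.inv_le_one.2 one_le_two)),
    ENNReal.inv_pow, inv_inv] at hsum
  rw [tsum_meetingSubarcs_eq E hk, ENNReal.ofReal_mul' (dyL_pos n).le, ofReal_dyL, mul_comm]
  gcongr
  simpa [ENNReal.ofReal_mul, ENNReal.ofReal_pow] using hsum

lemma exists_disjoint_descendant_of_tsum_le {E : Set ℂ} {C : ℝ} {n k : ℕ} (hk : k < 2 ^ n)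
    (hsum : ∑' I : MeetingSubarcs E n k, ENNReal.ofReal (dyL I.1.1) ≤
      ENNReal.ofReal (C * dyL n)) :
    ∃ i ≤ ⌈C⌉₊, ∃ j ∈ dyadicDescendants k i, Disjoint (dyadicArc (n + i) j) E := by
  by_contra! hmeet
  have hfull (i : ℕ) (hi : i ≤ ⌈C⌉₊) : (meetingDescendants E n k i).card = 2 ^ i :=
    (card_meetingDescendants_le E n k i).antisymm <| not_lt.1 fun hlt => by
      obtain ⟨j, hj, hdisj⟩ := card_meetingDescendants_lt_iff.1 hlt
      exact hmeet i hi j hj hdisj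
  rw [tsum_meetingSubarcs_eq E hk, ENNReal.ofReal_mul' (dyL_pos n).le, ofReal_dyL,
    mul_comm (ENNReal.ofReal C), ENNReal.mul_le_mul_iff_right (by simp) (by simp)] at hsum
  have hlow : ((⌈C⌉₊ + 1 : ℕ) : ℝ≥0∞) ≤
      ∑' i, ((meetingDescendants E n k i).card : ℝ≥0∞) * 2⁻¹ ^ i :=
    calc ((⌈C⌉₊ + 1 : ℕ) : ℝ≥0∞)
        = ∑ i ∈ Finset.range (⌈C⌉₊ + 1),
            ((meetingDescendants E n k i).card : ℝ≥0∞) * 2⁻¹ ^ i := by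
          rw [Finset.sum_congr rfl fun i hi => by
            rw [hfull i (Nat.lt_succ_iff.1 (Finset.mem_range.1 hi)), Nat.cast_pow,
              Nat.cast_ofNat, two_pow_mul_inv_two_pow]]
          simp
      _ ≤ _ := ENNReal.sum_le_tsum _
  have := (hlow.trans hsum).trans (ENNReal.ofReal_le_ofReal (Nat.le_ceil C))
  rw [ENNReal.ofReal_natCast, Nat.cast_le] at this
  omega

lemma porousWith_of_tsum_le {E : Set ℂ} {C : ℝ}
    (hsum : ∀ n k : ℕ, k < 2 ^ n →
      ∑' I : MeetingSubarcs E n k, ENNReal.ofReal (dyL I.1.1) ≤ ENNReal.ofReal (C * dyL n)) :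
    PorousWith ((2 ^ ⌈C⌉₊)⁻¹ / 8) E := by
  intro a t ht₀ ht₁
  obtain ⟨n, hn, hn'⟩ := exists_dyL_le_le ht₀ (by linarith)
  obtain ⟨k, hk, hJ⟩ := exists_dyadicArc_subset_arc a t hn
  obtain ⟨i, hi, j, hj, hdisj⟩ := exists_disjoint_descendant_of_tsum_le hk (hsum n k hk)
  refine ⟨dyA (n + i) j, dyL (n + i), dyL_pos _,
    subset_sdiff.2 ⟨(dyadicArc_subset_dyadicArc hj).trans hJ, hdisj⟩, ?_⟩
  have hi' : ((2 : ℝ) ^ ⌈C⌉₊)⁻¹ ≤ dyL i :=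
    inv_anti₀ (by positivity) (pow_le_pow_right₀ one_le_two hi)
  rw [dyL_add]
  nlinarith [dyL_pos n, dyL_pos i, (by positivity : (0 : ℝ) < (2 ^ ⌈C⌉₊)⁻¹)]

theorem porous_iff_dyadic_sums_general
    (E : Set ℂ) :
    Porous E ↔
      ∃ C : ℝ, 0 < C ∧ ∀ n k : ℕ, k < 2 ^ n →
        (∑' I : {p : ℕ × ℕ // p.2 < 2 ^ p.1 ∧ dyadicArc p.1 p.2 ⊆ dyadicArc n k ∧
            (dyadicArc p.1 p.2 ∩ E).Nonempty},
          ENNReal.ofReal (dyL I.1.1)) ≤ ENNReal.ofReal (C * dyL n) := by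
  constructor
  · rintro ⟨C, hC, hpor⟩
    obtain ⟨d, hd, hdC⟩ := exists_two_mul_dyL_le hC
    exact ⟨d * 2 ^ d, by positivity,
      fun n k hk => tsum_meetingSubarcs_le_of_porousWith hpor hd hdC hk⟩
  · rintro ⟨C, -, hsum⟩
    exact ⟨_, by positivity, porousWith_of_tsum_le hsum⟩

/-- Lemma 2, (a) ⇔ (b): a closed set `E ⊆ 𝕋` is porous if and
only if there is `C > 0` such that for every dyadic arc `J`,
`Σ_{I ∈ E(J)} |I| ≤ C|J|`, where `E(J)` is the family of dyadic arcs `I ⊆ J`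
meeting `E`. -/
theorem porous_iff_dyadic_sums
    (E : Set ℂ) (hE : IsClosed E) (hEc : E ⊆ circleSet) :
    Porous E ↔
      ∃ C : ℝ, 0 < C ∧ ∀ n k : ℕ, k < 2 ^ n →
        (∑' I : {p : ℕ × ℕ // p.2 < 2 ^ p.1 ∧ dyadicArc p.1 p.2 ⊆ dyadicArc n k ∧
            (dyadicArc p.1 p.2 ∩ E).Nonempty},
          ENNReal.ofReal (dyL I.1.1)) ≤ ENNReal.ofReal (C * dyL n) :=
  porous_iff_dyadic_sums_general E

end WEPPaper
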